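/- arXiv:1912.07075 — 3 statements merged into one kernel-verified Lean document; each statement's English description precedes it below -/
import Mathlib

section
/- Let u ∈ L²_μ(X) and let x^n be points in X such that Z_{x^n} = ‖G_{x^n} − I‖₂ ≤ δ for some δ ∈ [0,1). Then the weighted least-squares projection satisfies ‖u − Q^{x^n}_{V_m} u‖² ≤ ‖u − P_{V_m}u‖² + (1−δ)^{-1} ‖u − P_{V_m}u‖²_{x^n}. -/
/-!
Write `P = P_{V_m} u` and `P - Q^{x^n}_{V_m} u = ∑ⱼ cⱼ φⱼ`. Since `u - P` is `L²_μ`-orthogonal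
to `V_m`, Pythagoras gives `‖u - Q u‖² = ‖u - P u‖² + |c|²`. Since `Q u` minimises the discrete
semi-norm over `V_m`, `u - Q u` is orthogonal to `V_m` for the discrete semi-inner product, so
`‖P u - Q u‖²_{x^n} ≤ ‖u - P u‖²_{x^n}`. Finally `‖∑ⱼ cⱼ φⱼ‖²_{x^n} = cᵀ G_{x^n} c`, which is at
least `(1 - Z_{x^n}) |c|² ≥ (1 - δ) |c|²`.
-/

open MeasureTheory ProbabilityTheory

noncomputable section

/-- Spectral norm (matrix operator norm w.r.t. the Euclidean norm) of a real square matrix. -/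
def specNorm {m : ℕ} (A : Matrix (Fin m) (Fin m) ℝ) : ℝ :=
  ‖Matrix.toEuclideanCLM (𝕜 := ℝ) A‖

variable {d : ℕ}

/-- Squared `L²_μ` norm: `‖v‖² = ∫ v² dμ`. -/
def l2normSq {X : Set (Fin d → ℝ)} (μ : Measure X) (v : X → ℝ) : ℝ :=
  ∫ t, v t ^ 2 ∂μ

/-- Squared discrete semi-norm `‖v‖²_{x^n} = (1/n) ∑ᵢ w(xⁱ) v(xⁱ)²`. -/
def discNormSq {X : Set (Fin d → ℝ)} (w : X → ℝ) {n : ℕ} (x : Fin n → X) (v : X → ℝ) : ℝ :=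
  (1 / (n : ℝ)) * ∑ i, w (x i) * v (x i) ^ 2

/-- Empirical Gram matrix `G_{x^n} = (1/n) ∑ᵢ w(xⁱ) φ(xⁱ) ⊗ φ(xⁱ)`. -/
def gram {X : Set (Fin d → ℝ)} {m : ℕ} (w : X → ℝ) (φ : Fin m → X → ℝ) {n : ℕ}
    (x : Fin n → X) : Matrix (Fin m) (Fin m) ℝ :=
  Matrix.of fun j k => (1 / (n : ℝ)) * ∑ i, w (x i) * (φ j (x i) * φ k (x i))

/-- Stability statistic `Z_{x^n} = ‖G_{x^n} − I‖₂`. -/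
def Zstat {X : Set (Fin d → ℝ)} {m : ℕ} (w : X → ℝ) (φ : Fin m → X → ℝ) {n : ℕ}
    (x : Fin n → X) : ℝ :=
  specNorm (gram w φ x - 1)

/-- Orthogonal projection onto `V_m`: `P_{V_m} u = ∑ⱼ (∫ u φⱼ dμ) φⱼ`. -/
def proj {X : Set (Fin d → ℝ)} (μ : Measure X) {m : ℕ} (φ : Fin m → X → ℝ) (u : X → ℝ) :
    X → ℝ :=
  fun t => ∑ j, (∫ s, u s * φ j s ∂μ) * φ j t

/-- Weighted supremum norm `‖v‖_{∞,w} = sup_x w(x)^{1/2} |v(x)|`. -/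
def wSupNorm {X : Set (Fin d → ℝ)} (w : X → ℝ) (v : X → ℝ) : ℝ :=
  ⨆ t : X, Real.sqrt (w t) * |v t|

/-- The approximation space `V_m`, the span of `φ_1, …, φ_m`. -/
def Vspan {X : Set (Fin d → ℝ)} {m : ℕ} (φ : Fin m → X → ℝ) : Submodule ℝ (X → ℝ) :=
  Submodule.span ℝ (Set.range φ)

open Matrix

theorem abs_dotProduct_mulVec_le_specNorm {m : ℕ} (A : Matrix (Fin m) (Fin m) ℝ)
    (c : Fin m → ℝ) : |c ⬝ᵥ (A *ᵥ c)| ≤ specNorm A * (c ⬝ᵥ c) := by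
  set v := WithLp.toLp 2 c
  have hv : ‖v‖ ^ 2 = c ⬝ᵥ c := by
    rw [← real_inner_self_eq_norm_sq, EuclideanSpace.inner_toLp_toLp, star_trivial]
  calc |c ⬝ᵥ (A *ᵥ c)| = |inner ℝ v (toEuclideanCLM (𝕜 := ℝ) A v)| := by
        rw [toEuclideanCLM_toLp, EuclideanSpace.inner_toLp_toLp, star_trivial, dotProduct_comm]
    _ ≤ ‖v‖ * (specNorm A * ‖v‖) := (abs_real_inner_le_norm _ _).trans <| by
        gcongr; exact (toEuclideanCLM (𝕜 := ℝ) A).le_opNorm v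
    _ = specNorm A * (c ⬝ᵥ c) := by rw [← hv]; ring

theorem one_sub_specNorm_sub_one_mul_dotProduct_le {m : ℕ} (A : Matrix (Fin m) (Fin m) ℝ)
    (c : Fin m → ℝ) : (1 - specNorm (A - 1)) * (c ⬝ᵥ c) ≤ c ⬝ᵥ (A *ᵥ c) := by
  have h := neg_le_of_abs_le (abs_dotProduct_mulVec_le_specNorm (A - 1) c)
  rw [sub_mulVec, one_mulVec, dotProduct_sub] at h
  linarith

theorem eq_zero_of_forall_two_mul_le_sq_mul {b c : ℝ} (h : ∀ t : ℝ, 2 * t * b ≤ t ^ 2 * c) :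
    b = 0 := by
  obtain ⟨s, rfl⟩ : ∃ s, b = s * (|c| + 1) := ⟨b / (|c| + 1), by field_simp⟩
  have hs : s ^ 2 * (|c| + 2) ≤ 0 := by nlinarith [h s, le_abs_self c, sq_nonneg s]
  have : s = 0 := by nlinarith [sq_nonneg s, abs_nonneg c]
  simp [this]

namespace LinearMap.BilinForm

variable {E : Type*} [AddCommGroup E] [Module ℝ E] {B : LinearMap.BilinForm ℝ E}

theorem apply_sum_smul_sum_smul {ι : Type*} [Fintype ι] (v : ι → E) (c : ι → ℝ) :
    B (∑ j, c j • v j) (∑ j, c j • v j) = c ⬝ᵥ (Matrix.of (fun j k => B (v j) (v k)) *ᵥ c) := by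
  simp only [sum_left, sum_right, smul_left, smul_right, dotProduct, mulVec, of_apply,
    Finset.mul_sum]
  rw [Finset.sum_comm]
  exact Finset.sum_congr rfl fun j _ => Finset.sum_congr rfl fun k _ => by ring

theorem IsSymm.apply_sub_smul_self (hB : B.IsSymm) (r g : E) (t : ℝ) :
    B (r - t • g) (r - t • g) = B r r - 2 * t * B r g + t ^ 2 * B g g := by
  simp only [sub_left, sub_right, smul_left, smul_right, hB.eq g r]
  ring

theorem IsSymm.apply_eq_zero_of_isMinOn (hB : B.IsSymm) {K : Submodule ℝ E} {u q : E}
    (hq : q ∈ K) (hmin : IsMinOn (fun v => B (u - v) (u - v)) K q) {g : E} (hg : g ∈ K) :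
    B (u - q) g = 0 := by
  refine eq_zero_of_forall_two_mul_le_sq_mul (c := B g g) fun t => ?_
  have h : B (u - q) (u - q) ≤ B (u - q - t • g) (u - q - t • g) := by
    simpa only [sub_add_eq_sub_sub] using isMinOn_iff.1 hmin _ (K.add_mem hq (K.smul_mem t hg))
  rw [hB.apply_sub_smul_self] at h
  linarith

theorem IsPosSemidef.apply_sub_le_of_isMinOn (hB : B.IsPosSemidef) {K : Submodule ℝ E}
    {u p q : E} (hp : p ∈ K) (hq : q ∈ K) (hmin : IsMinOn (fun v => B (u - v) (u - v)) K q) :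
    B (p - q) (p - q) ≤ B (u - p) (u - p) := by
  have hexp : u - p = (u - q) - (1 : ℝ) • (p - q) := by rw [one_smul]; abel
  rw [hexp, hB.isSymm.apply_sub_smul_self,
    hB.isSymm.apply_eq_zero_of_isMinOn hq hmin (K.sub_mem hp hq)]
  linarith [hB.isNonneg.nonneg (u - q)]

end LinearMap.BilinForm

section Orthonormal

variable {α ι : Type*} [MeasurableSpace α] {μ : Measure α} [Fintype ι] {φ : ι → α → ℝ}

theorem integral_mul_sum_smul (hφ : ∀ j, MemLp (φ j) 2 μ) {f : α → ℝ} (hf : MemLp f 2 μ)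
    (c : ι → ℝ) :
    ∫ t, f t * (∑ j, c j • φ j) t ∂μ = ∑ j, c j * ∫ t, f t * φ j t ∂μ := by
  simp only [Finset.sum_apply, Pi.smul_apply, smul_eq_mul, Finset.mul_sum, mul_left_comm (f _)]
  rw [integral_finsetSum]
  · simp only [integral_const_mul]
  · exact fun j _ => (hf.integrable_mul (hφ j)).const_mul (c j)

variable [DecidableEq ι] (hφ : ∀ j, MemLp (φ j) 2 μ)
  (hortho : ∀ i j, (∫ t, φ i t * φ j t ∂μ) = if i = j then (1 : ℝ) else 0)
include hφ hortho

theorem integral_sum_smul_mul_of_orthonormal (c : ι → ℝ) (k : ι) :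
    ∫ t, (∑ j, c j • φ j) t * φ k t ∂μ = c k := by
  simp_rw [mul_comm _ (φ k _)]
  rw [integral_mul_sum_smul hφ (hφ k)]
  simp [hortho]

theorem integral_sum_smul_sq_of_orthonormal (c : ι → ℝ) :
    ∫ t, (∑ j, c j • φ j) t ^ 2 ∂μ = c ⬝ᵥ c := by
  simp_rw [sq]
  rw [integral_mul_sum_smul hφ (memLp_finsetSum' _ fun j _ => (hφ j).const_smul (c j))]
  simp only [integral_sum_smul_mul_of_orthonormal hφ hortho]
  rfl

end Orthonormal

theorem integral_add_sq_of_integral_mul_eq_zero {α : Type*} [MeasurableSpace α] {μ : Measure α}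
    {f g : α → ℝ} (hf : MemLp f 2 μ) (hg : MemLp g 2 μ) (h : ∫ t, f t * g t ∂μ = 0) :
    ∫ t, (f t + g t) ^ 2 ∂μ = ∫ t, f t ^ 2 ∂μ + ∫ t, g t ^ 2 ∂μ := by
  have hfg : Integrable (fun t => 2 * (f t * g t)) μ := (hf.integrable_mul hg).const_mul 2
  simp_rw [add_sq, mul_assoc]
  rw [integral_add (f := fun t => f t ^ 2 + 2 * (f t * g t)) (hf.integrable_sq.add hfg)
      hg.integrable_sq,
    integral_add hf.integrable_sq hfg, integral_const_mul, h, mul_zero, add_zero]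

def discForm {α : Type*} (w : α → ℝ) {n : ℕ} (x : Fin n → α) : LinearMap.BilinForm ℝ (α → ℝ) :=
  LinearMap.mk₂ ℝ (fun f g => (1 / (n : ℝ)) * ∑ i, w (x i) * (f (x i) * g (x i)))
    (fun _ _ _ => by
      simp only [Pi.add_apply, Finset.mul_sum, ← Finset.sum_add_distrib]
      exact Finset.sum_congr rfl fun _ _ => by ring)
    (fun _ _ _ => by
      simp only [Pi.smul_apply, smul_eq_mul, Finset.mul_sum]
      exact Finset.sum_congr rfl fun _ _ => by ring)
    (fun _ _ _ => by
      simp only [Pi.add_apply, Finset.mul_sum, ← Finset.sum_add_distrib]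
      exact Finset.sum_congr rfl fun _ _ => by ring)
    (fun _ _ _ => by
      simp only [Pi.smul_apply, smul_eq_mul, Finset.mul_sum]
      exact Finset.sum_congr rfl fun _ _ => by ring)

theorem discForm_isPosSemidef {α : Type*} {w : α → ℝ} (hw : ∀ t, 0 ≤ w t) {n : ℕ}
    (x : Fin n → α) : (discForm w x).IsPosSemidef where
  eq f g := by simp only [discForm, LinearMap.mk₂_apply, mul_comm (f _)]
  nonneg f := by
    simp only [discForm, LinearMap.mk₂_apply]
    exact mul_nonneg (by positivity) (Finset.sum_nonneg fun i _ => mul_nonneg (hw _)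
      (mul_self_nonneg _))

section LeastSquares

variable {X : Set (Fin d → ℝ)} {m : ℕ} {φ : Fin m → X → ℝ}

theorem discNormSq_eq_discForm (w : X → ℝ) {n : ℕ} (x : Fin n → X) (v : X → ℝ) :
    discNormSq w x v = discForm w x v v := by
  simp only [discNormSq, discForm, LinearMap.mk₂_apply, sq]

theorem discNormSq_sum_smul (w : X → ℝ) {n : ℕ} (x : Fin n → X) (c : Fin m → ℝ) :
    discNormSq w x (∑ j, c j • φ j) = c ⬝ᵥ (gram w φ x *ᵥ c) := by
  rw [discNormSq_eq_discForm, LinearMap.BilinForm.apply_sum_smul_sum_smul]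
  rfl

variable {μ : Measure X} {u : X → ℝ}

theorem proj_eq_sum_smul : proj μ φ u = ∑ j, (∫ s, u s * φ j s ∂μ) • φ j := by
  ext t
  simp [proj]

theorem proj_mem_Vspan : proj μ φ u ∈ Vspan φ := by
  rw [proj_eq_sum_smul]
  exact Submodule.sum_mem _ fun j _ => Submodule.smul_mem _ _ (Submodule.subset_span ⟨j, rfl⟩)

theorem memLp_proj (hφ : ∀ j, MemLp (φ j) 2 μ) : MemLp (proj μ φ u) 2 μ := by
  rw [proj_eq_sum_smul]
  exact memLp_finsetSum' _ fun j _ => (hφ j).const_smul _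

variable (hφ : ∀ j, MemLp (φ j) 2 μ)
  (hortho : ∀ i j, (∫ t, φ i t * φ j t ∂μ) = if i = j then (1 : ℝ) else 0)
  (hu : MemLp u 2 μ)
include hφ hortho hu

theorem integral_sub_proj_mul_eq_zero (k : Fin m) :
    ∫ t, (u - proj μ φ u) t * φ k t ∂μ = 0 := by
  simp only [Pi.sub_apply, sub_mul]
  rw [integral_sub, proj_eq_sum_smul, integral_sum_smul_mul_of_orthonormal hφ hortho, sub_self]
  exacts [hu.integrable_mul (hφ k), (memLp_proj hφ).integrable_mul (hφ k)]

theorem l2normSq_sub_eq_of_proj_sub_eq {v : X → ℝ} {c : Fin m → ℝ}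
    (hc : ∑ j, c j • φ j = proj μ φ u - v) :
    l2normSq μ (u - v) = l2normSq μ (u - proj μ φ u) + c ⬝ᵥ c := by
  have hres : MemLp (u - proj μ φ u) 2 μ := hu.sub (memLp_proj hφ)
  have horth : ∫ t, (u - proj μ φ u) t * (∑ j, c j • φ j) t ∂μ = 0 := by
    simp only [integral_mul_sum_smul hφ hres, integral_sub_proj_mul_eq_zero hφ hortho hu,
      mul_zero, Finset.sum_const_zero]
  have hsplit : u - v = (u - proj μ φ u) + ∑ j, c j • φ j := by rw [hc]; abel
  rw [l2normSq, l2normSq, hsplit, ← integral_sum_smul_sq_of_orthonormal hφ hortho c]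
  exact integral_add_sq_of_integral_mul_eq_zero hres
    (memLp_finsetSum' _ fun j _ => (hφ j).const_smul (c j)) horth

end LeastSquares

theorem lsq_quasi_optimality_under_condition_general
    {m n : ℕ} {X : Set (Fin d → ℝ)} (μ : Measure X)
    (φ : Fin m → X → ℝ) (hφ2 : ∀ j, MemLp (φ j) 2 μ)
    (hortho : ∀ i j, (∫ t, φ i t * φ j t ∂μ) = if i = j then (1 : ℝ) else 0)
    (w : X → ℝ) (hw : ∀ t, 0 ≤ w t)
    (u : X → ℝ) (hu : MemLp u 2 μ)
    (x : Fin n → X) (δ : ℝ) (hδ1 : δ < 1)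
    (hZ : Zstat w φ x ≤ δ)
    (Qu : X → ℝ) (hQmem : Qu ∈ Vspan φ)
    (hQmin : ∀ v ∈ Vspan φ, discNormSq w x (u - Qu) ≤ discNormSq w x (u - v)) :
    l2normSq μ (u - Qu) ≤
      l2normSq μ (u - proj μ φ u) + (1 - δ)⁻¹ * discNormSq w x (u - proj μ φ u) := by
  obtain ⟨c, hc⟩ := (Submodule.mem_span_range_iff_exists_fun ℝ).1 (sub_mem proj_mem_Vspan hQmem)
  have hdisc : discNormSq w x (proj μ φ u - Qu) ≤ discNormSq w x (u - proj μ φ u) := by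
    simp only [discNormSq_eq_discForm] at hQmin ⊢
    exact (discForm_isPosSemidef hw x).apply_sub_le_of_isMinOn proj_mem_Vspan hQmem hQmin
  have hstab : (1 - δ) * (c ⬝ᵥ c) ≤ discNormSq w x (proj μ φ u - Qu) := by
    rw [← hc, discNormSq_sum_smul]
    refine le_trans ?_ (one_sub_specNorm_sub_one_mul_dotProduct_le _ c)
    exact mul_le_mul_of_nonneg_right (by rw [Zstat] at hZ; linarith)
      (dotProduct_self_star_nonneg c)
  rw [l2normSq_sub_eq_of_proj_sub_eq hφ2 hortho hu hc, add_le_add_iff_left,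
    le_inv_mul_iff₀ (sub_pos.2 hδ1)]
  exact hstab.trans hdisc

/-- quasi-optimality of the weighted least-squares projection under
the stability condition `Z_{x^n} ≤ δ`. -/
theorem lsq_quasi_optimality_under_condition
    {m n : ℕ} {X : Set (Fin d → ℝ)} (μ : Measure X) [IsProbabilityMeasure μ]
    (φ : Fin m → X → ℝ) (hφ2 : ∀ j, MemLp (φ j) 2 μ)
    (hortho : ∀ i j, (∫ t, φ i t * φ j t ∂μ) = if i = j then (1 : ℝ) else 0)
    (w : X → ℝ) (hw : ∀ t, 0 ≤ w t)
    (u : X → ℝ) (hu : MemLp u 2 μ)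
    (x : Fin n → X) (δ : ℝ) (hδ0 : 0 ≤ δ) (hδ1 : δ < 1)
    (hZ : Zstat w φ x ≤ δ)
    (Qu : X → ℝ) (hQmem : Qu ∈ Vspan φ)
    (hQmin : ∀ v ∈ Vspan φ, discNormSq w x (u - Qu) ≤ discNormSq w x (u - v)) :
    l2normSq μ (u - Qu) ≤
      l2normSq μ (u - proj μ φ u) + (1 - δ)⁻¹ * discNormSq w x (u - proj μ φ u) :=
  lsq_quasi_optimality_under_condition_general μ φ hφ2 hortho w hw u hu x δ hδ1 hZ Qu hQmem hQmin
end
end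

section
/- Let x^{n,1},…,x^{n,M} be M i.i.d. samples from ρ^⊗n, where P(Z_{x^n} > δ) ≤ η for a single sample x^n ~ ρ^⊗n, with δ ∈ (0,1) and η ∈ (0,1). Let x^{n,⋆} attain min_{1 ≤ i ≤ M} Z_{x^{n,i}}, and let x̃^n have the law of x^{n,⋆} conditioned on the event A_δ = {Z_{x^{n,⋆}} ≤ δ}. Then for any v ∈ L²_μ(X), E(‖v‖²_{x̃^n}) ≤ M (1 − η^M)^{-1} ‖v‖². -/
/-!
Write `x^{n,⋆}` for the selected sample and `A_δ` for the event that it is stable. Bounding the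
selected sample's discrete norm by the sum over all `M` samples, and using that each sample has
expected discrete norm `‖v‖²` (the weight `w` cancels the density `w⁻¹` of `ρ`), gives
`E(‖v‖²_{x^{n,⋆}}) ≤ M ‖v‖²`. Conditioning on `A_δ` costs at most a factor `P(A_δ)⁻¹`, and
`A_δ` can fail only if all `M` independent samples are unstable, so `P(A_δ) ≥ 1 - η^M`.
-/

open MeasureTheory ProbabilityTheory

noncomputable section

variable {d : ℕ}

/-- Law of `M` i.i.d. samples, each an `n`-tuple of i.i.d. points with distribution `ρ`. -/
def bigP {X : Set (Fin d → ℝ)} (ρ : Measure X) (M n : ℕ) : Measure (Fin M → Fin n → X) :=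
  Measure.pi fun _ => Measure.pi fun _ => ρ

/-- The constant `C(ε,M) = M (1−ε)^{1−ε}/(M−ε)^{1−ε}` (with `0⁰ = 1`). -/
def Cconst (M : ℕ) (ε : ℝ) : ℝ :=
  (M : ℝ) * (1 - ε) ^ (1 - ε) / ((M : ℝ) - ε) ^ (1 - ε)

section WeightedDensity

variable {α : Type*} [MeasurableSpace α] {μ : Measure α} {w : α → ℝ}

lemma integrable_mul_withDensity_inv (hw : ∀ t, 0 < w t) (hwm : Measurable w) {g : α → ℝ}
    (hg : Integrable g μ) :
    Integrable (fun t => w t * g t) (μ.withDensity fun t => ENNReal.ofReal (w t)⁻¹) := by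
  have hdens : Measurable fun t => ENNReal.ofReal (w t)⁻¹ := hwm.inv.ennreal_ofReal
  rw [integrable_withDensity_iff hdens (ae_of_all _ fun _ => ENNReal.ofReal_lt_top)]
  refine hg.congr (ae_of_all _ fun t => ?_)
  dsimp only
  rw [ENNReal.toReal_ofReal (inv_nonneg.2 (hw t).le), mul_right_comm, mul_inv_cancel₀ (hw t).ne',
    one_mul]

lemma integral_mul_withDensity_inv (hw : ∀ t, 0 < w t) (hwm : Measurable w) (g : α → ℝ) :
    ∫ t, w t * g t ∂(μ.withDensity fun t => ENNReal.ofReal (w t)⁻¹) = ∫ t, g t ∂μ := by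
  have hdens : Measurable fun t => ENNReal.ofReal (w t)⁻¹ := hwm.inv.ennreal_ofReal
  rw [integral_withDensity_eq_integral_toReal_smul hdens
    (ae_of_all _ fun _ => ENNReal.ofReal_lt_top)]
  refine integral_congr_ae (ae_of_all _ fun t => ?_)
  dsimp only
  rw [ENNReal.toReal_ofReal (inv_nonneg.2 (hw t).le), smul_eq_mul, inv_mul_cancel_left₀ (hw t).ne']

end WeightedDensity

section DiscreteNorm

variable {n : ℕ} {X : Set (Fin d → ℝ)} {w v : X → ℝ}

lemma discNormSq_nonneg (hw : ∀ t, 0 ≤ w t) (x : Fin n → X) : 0 ≤ discNormSq w x v :=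
  mul_nonneg (by positivity) (Finset.sum_nonneg fun _ _ => mul_nonneg (hw _) (sq_nonneg _))

lemma measurable_discNormSq (hwm : Measurable w) (hvm : Measurable v) :
    Measurable fun x : Fin n → X => discNormSq w x v := by
  unfold discNormSq
  fun_prop

variable {ρ : Measure X} [IsProbabilityMeasure ρ]

lemma integrable_discNormSq (h : Integrable (fun t => w t * v t ^ 2) ρ) :
    Integrable (fun x => discNormSq w x v) (Measure.pi fun _ : Fin n => ρ) :=
  (integrable_finsetSum _ fun i _ =>
    integrable_comp_eval (μ := fun _ => ρ) (i := i) (f := fun t => w t * v t ^ 2) h).const_mul _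

lemma integral_discNormSq_le (hw : ∀ t, 0 ≤ w t) (h : Integrable (fun t => w t * v t ^ 2) ρ) :
    ∫ x, discNormSq w x v ∂(Measure.pi fun _ : Fin n => ρ) ≤ ∫ t, w t * v t ^ 2 ∂ρ := by
  have hcoord : ∀ i : Fin n, ∫ x, w (x i) * v (x i) ^ 2 ∂(Measure.pi fun _ => ρ)
      = ∫ t, w t * v t ^ 2 ∂ρ := fun i =>
    integral_comp_eval (μ := fun _ => ρ) (f := fun t => w t * v t ^ 2) h.aestronglyMeasurable
  simp only [discNormSq]
  rw [integral_const_mul, integral_finsetSum _ fun i _ =>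
    integrable_comp_eval (μ := fun _ => ρ) (f := fun t => w t * v t ^ 2) h]
  simp only [hcoord, Finset.sum_const, Finset.card_univ, Fintype.card_fin, nsmul_eq_mul]
  rcases n.eq_zero_or_pos with rfl | hn
  · simpa using integral_nonneg fun t => mul_nonneg (hw t) (sq_nonneg (v t))
  · rw [← mul_assoc, one_div, inv_mul_cancel₀ (by positivity), one_mul]

end DiscreteNorm

section Selection

variable {Ω ι : Type*} [MeasurableSpace Ω] [Fintype ι] [MeasurableSpace ι]
  [MeasurableSingletonClass ι] {ν : Measure Ω} [IsProbabilityMeasure ν] {I : (ι → Ω) → ι}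

lemma measurable_apply_select (hI : Measurable I) : Measurable fun ω : ι → Ω => ω (I ω) :=
  (measurable_from_prod_countable_left (f := fun p : (ι → Ω) × ι => p.1 p.2)
    fun i => measurable_pi_apply i).comp (measurable_id.prodMk hI)

variable {f : Ω → ℝ}

lemma integrable_comp_apply_select (hf0 : ∀ y, 0 ≤ f y) (hfm : Measurable f)
    (hf : Integrable f ν) (hI : Measurable I) :
    Integrable (fun ω => f (ω (I ω))) (Measure.pi fun _ : ι => ν) := by
  refine (integrable_finsetSum Finset.univ fun i _ => integrable_comp_eval (i := i) hf).mono'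
    (hfm.comp (measurable_apply_select hI)).aestronglyMeasurable (ae_of_all _ fun ω => ?_)
  rw [Real.norm_of_nonneg (hf0 _)]
  exact Finset.single_le_sum (fun i _ => hf0 (ω i)) (Finset.mem_univ (I ω))

lemma integral_comp_apply_select_le (hf0 : ∀ y, 0 ≤ f y) (hfm : Measurable f)
    (hf : Integrable f ν) (hI : Measurable I) :
    ∫ ω, f (ω (I ω)) ∂(Measure.pi fun _ : ι => ν) ≤ Fintype.card ι * ∫ y, f y ∂ν :=
  calc ∫ ω, f (ω (I ω)) ∂(Measure.pi fun _ : ι => ν)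
      ≤ ∫ ω, ∑ i, f (ω i) ∂(Measure.pi fun _ : ι => ν) :=
        integral_mono (integrable_comp_apply_select hf0 hfm hf hI)
          (integrable_finsetSum _ fun i _ => integrable_comp_eval hf)
          fun ω => Finset.single_le_sum (fun i _ => hf0 (ω i)) (Finset.mem_univ (I ω))
    _ = Fintype.card ι * ∫ y, f y ∂ν := by
        rw [integral_finsetSum _ fun i _ => integrable_comp_eval hf]
        simp [integral_comp_eval (μ := fun _ => ν) (f := f) hf.aestronglyMeasurable]

end Selection

lemma ofReal_one_sub_pow_le_measure_pi {Ω ι : Type*} [MeasurableSpace Ω] [Fintype ι] {ν : Measure Ω}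
    [IsProbabilityMeasure ν] {S : Set Ω} {η : ℝ} (hη : 0 ≤ η) (hS : ν S ≤ ENNReal.ofReal η)
    {A : Set (ι → Ω)} (hA : Aᶜ ⊆ Set.univ.pi fun _ => S) :
    ENNReal.ofReal (1 - η ^ Fintype.card ι) ≤ (Measure.pi fun _ : ι => ν) A := by
  have hAc : (Measure.pi fun _ : ι => ν) Aᶜ ≤ ENNReal.ofReal (η ^ Fintype.card ι) :=
    calc (Measure.pi fun _ : ι => ν) Aᶜ ≤ ∏ _i : ι, ν S := by
          rw [← Measure.pi_pi]; exact measure_mono hA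
      _ ≤ ∏ _i : ι, ENNReal.ofReal η := Finset.prod_le_prod' fun _ _ => hS
      _ = ENNReal.ofReal (η ^ Fintype.card ι) := by
          rw [Finset.prod_const, Finset.card_univ, ENNReal.ofReal_pow hη]
  rw [ENNReal.ofReal_sub _ (by positivity), ENNReal.ofReal_one, tsub_le_iff_right]
  calc (1 : ENNReal) = (Measure.pi fun _ : ι => ν) Set.univ := measure_univ.symm
    _ ≤ _ + _ := measure_univ_le_add_compl A
    _ ≤ _ := by gcongr

lemma integral_cond_le_of_le_measure {Ω : Type*} [MeasurableSpace Ω] {P : Measure Ω}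
    [IsFiniteMeasure P] {A : Set Ω}
    {g : Ω → ℝ} (hg0 : 0 ≤ᵐ[P] g) (hg : Integrable g P) {c : ℝ} (hc : 0 < c)
    (hA : ENNReal.ofReal c ≤ P A) :
    ∫ ω, g ω ∂P[|A] ≤ c⁻¹ * ∫ ω, g ω ∂P := by
  have hinv : (P A)⁻¹.toReal ≤ c⁻¹ := by
    rw [ENNReal.toReal_inv]
    exact inv_anti₀ hc ((ENNReal.ofReal_le_iff_le_toReal
      (ne_top_of_le_ne_top (measure_ne_top P Set.univ) (measure_mono (Set.subset_univ A)))).1 hA)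
  rw [ProbabilityTheory.cond, integral_smul_measure, smul_eq_mul]
  exact mul_le_mul hinv (integral_mono_measure Measure.restrict_le_self hg0 hg)
    (integral_nonneg_of_ae (ae_restrict_of_ae hg0)) (by positivity)

theorem boosted_discrete_norm_expectation_bound_general
    {m n M : ℕ} (hM : 0 < M) {X : Set (Fin d → ℝ)} (μ : Measure X)
    (w : X → ℝ) (hw : ∀ t, 0 < w t) (hwm : Measurable w)
    (ρ : Measure X) [IsProbabilityMeasure ρ]
    (hρ : ρ = μ.withDensity fun t => ENNReal.ofReal (w t)⁻¹)
    (φ : Fin m → X → ℝ)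
    (δ η : ℝ) (hη0 : 0 < η) (hη1 : η < 1)
    (hPZ : (Measure.pi fun _ : Fin n => ρ) {y | δ < Zstat w φ y} ≤ ENNReal.ofReal η)
    (Istar : (Fin M → Fin n → X) → Fin M) (hIm : Measurable Istar)
    (hmin : ∀ (ω : Fin M → Fin n → X) (i : Fin M),
      Zstat w φ (ω (Istar ω)) ≤ Zstat w φ (ω i))
    (v : X → ℝ) (hvm : Measurable v) (hv2 : MemLp v 2 μ) :
    (∫ ω, discNormSq w (ω (Istar ω)) v
        ∂((bigP ρ M n)[|{ω | Zstat w φ (ω (Istar ω)) ≤ δ}])) ≤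
      M * (1 - η ^ M)⁻¹ * l2normSq μ v := by
  have hwv : Integrable (fun t => w t * v t ^ 2) ρ :=
    hρ ▸ integrable_mul_withDensity_inv hw hwm hv2.integrable_sq
  have hdisc : ∫ y, discNormSq w y v ∂(Measure.pi fun _ : Fin n => ρ) ≤ l2normSq μ v :=
    (integral_discNormSq_le (fun t => (hw t).le) hwv).trans_eq
      (hρ ▸ integral_mul_withDensity_inv hw hwm _)
  have hstable : ENNReal.ofReal (1 - η ^ M) ≤ bigP ρ M n {ω | Zstat w φ (ω (Istar ω)) ≤ δ} := by
    simpa only [Fintype.card_fin, bigP] using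
      ofReal_one_sub_pow_le_measure_pi (ι := Fin M) hη0.le hPZ
        (A := {ω | Zstat w φ (ω (Istar ω)) ≤ δ})
        fun ω hω i _ => (not_le.1 hω : δ < _).trans_le (hmin ω i)
  have hnonneg := discNormSq_nonneg (n := n) (v := v) fun t => (hw t).le
  have hmeas := measurable_discNormSq (n := n) hwm hvm
  have hint := integrable_discNormSq (n := n) hwv
  have hgap : 0 < 1 - η ^ M := sub_pos.2 (pow_lt_one₀ hη0.le hη1 hM.ne')
  calc _ ≤ (1 - η ^ M)⁻¹ * ∫ ω, discNormSq w (ω (Istar ω)) v ∂bigP ρ M n :=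
        integral_cond_le_of_le_measure (ae_of_all _ fun ω => hnonneg _)
          (integrable_comp_apply_select hnonneg hmeas hint hIm) hgap hstable
    _ ≤ (1 - η ^ M)⁻¹ * (M * l2normSq μ v) := by
        gcongr
        simpa only [bigP, Fintype.card_fin] using
          (integral_comp_apply_select_le hnonneg hmeas hint hIm).trans
            (mul_le_mul_of_nonneg_left hdisc (Nat.cast_nonneg _))
    _ = _ := by ring

/-- expectation bound for the discrete semi-norm under the boosted
(conditioned) sampling distribution. -/
theorem boosted_discrete_norm_expectation_bound
    {m n M : ℕ} (hM : 0 < M) {X : Set (Fin d → ℝ)} (μ : Measure X) [IsProbabilityMeasure μ]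
    (w : X → ℝ) (hw : ∀ t, 0 < w t) (hwm : Measurable w)
    (ρ : Measure X) [IsProbabilityMeasure ρ]
    (hρ : ρ = μ.withDensity fun t => ENNReal.ofReal (w t)⁻¹)
    (φ : Fin m → X → ℝ) (hφm : ∀ j, Measurable (φ j)) (hφ2 : ∀ j, MemLp (φ j) 2 μ)
    (hortho : ∀ i j, (∫ t, φ i t * φ j t ∂μ) = if i = j then (1 : ℝ) else 0)
    (δ η : ℝ) (hδ0 : 0 < δ) (hδ1 : δ < 1) (hη0 : 0 < η) (hη1 : η < 1)
    (hPZ : (Measure.pi fun _ : Fin n => ρ) {y | δ < Zstat w φ y} ≤ ENNReal.ofReal η)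
    (Istar : (Fin M → Fin n → X) → Fin M) (hIm : Measurable Istar)
    (hmin : ∀ (ω : Fin M → Fin n → X) (i : Fin M),
      Zstat w φ (ω (Istar ω)) ≤ Zstat w φ (ω i))
    (hexch : ∀ σ : Equiv.Perm (Fin M),
      Measure.map (fun ω : Fin M → Fin n → X => ((fun i => ω (σ i)), σ.symm (Istar ω)))
          (bigP ρ M n) =
        Measure.map (fun ω => (ω, Istar ω)) (bigP ρ M n))
    (v : X → ℝ) (hvm : Measurable v) (hv2 : MemLp v 2 μ) :
    (∫ ω, discNormSq w (ω (Istar ω)) v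
        ∂((bigP ρ M n)[|{ω | Zstat w φ (ω (Istar ω)) ≤ δ}])) ≤
      M * (1 - η ^ M)⁻¹ * l2normSq μ v :=
  boosted_discrete_norm_expectation_bound_general hM μ w hw hwm ρ hρ φ δ η hη0 hη1 hPZ Istar hIm
    hmin v hvm hv2
end
end

section
/- Let w be the optimal weight function defined by w(x)^{-1} = (1/m) Σ_{j=1}^m φ_j(x)², where (φ_1,…,φ_m) is an orthonormal basis of V_m in L²_μ(X). Then for every v ∈ L²_μ(X) with ‖v‖_{∞,w} = sup_{x∈X} w(x)^{1/2}|v(x)| < ∞, the orthogonal projection satisfies ‖P_{V_m} v‖_{∞,w} ≤ m ‖v‖_{∞,w}; in particular the constant c_m = sup{‖P_{V_m}v‖_{∞,w} : ‖v‖_{∞,w} ≤ 1} satisfies c_m ≤ m. -/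
open MeasureTheory ProbabilityTheory

noncomputable section

variable {d : ℕ}

/-!
Write `cⱼ = ∫ v φⱼ dμ` and `S = ‖v‖_{∞,w}`. Since `|v| ≤ S w^{-1/2}`, the AM-GM inequality
`w^{-1/2} |φⱼ| ≤ (w⁻¹ + φⱼ²) / 2` bounds `|cⱼ|` by `S (∫ w⁻¹ + ∫ φⱼ²) / 2 = S`. By Cauchy–Schwarz,
`w (P v)² ≤ w (∑ cⱼ²) (∑ φⱼ²) = m ∑ cⱼ² ≤ m² S²`.
-/

section MeanSquareWeight

variable {m : ℕ} {a : ℝ} {y : Fin m → ℝ}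

theorem nonneg_of_inv_eq_mean_sq (h : a⁻¹ = 1 / (m : ℝ) * ∑ j, y j ^ 2) : 0 ≤ a :=
  inv_nonneg.mp (h ▸ by positivity)

theorem mul_sum_sq_le_of_inv_eq_mean_sq (h : a⁻¹ = 1 / (m : ℝ) * ∑ j, y j ^ 2) :
    a * ∑ j, y j ^ 2 ≤ m := by
  rcases eq_or_ne a 0 with rfl | ha
  · simp
  have hm : (m : ℝ) ≠ 0 := fun hm => by simp [hm, ha] at h
  rw [show ∑ j, y j ^ 2 = m * a⁻¹ by rw [h]; field_simp, mul_left_comm, mul_inv_cancel₀ ha,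
    mul_one]

theorem eq_zero_of_inv_eq_mean_sq (h : a⁻¹ = 1 / (m : ℝ) * ∑ j, y j ^ 2) (ha : a = 0)
    (j : Fin m) : y j = 0 := by
  have hsum : ∑ k, y k ^ 2 = 0 := by
    have hm : (m : ℝ) ≠ 0 := Nat.cast_ne_zero.mpr (Fin.pos j).ne'
    simpa [ha, hm] using h.symm
  exact pow_eq_zero_iff two_ne_zero |>.mp <|
    (Finset.sum_eq_zero_iff_of_nonneg fun k _ => sq_nonneg (y k)).mp hsum j (Finset.mem_univ j)

end MeanSquareWeight

theorem abs_mul_le_of_sqrt_mul_abs_le {a x y S : ℝ} (ha : 0 ≤ a) (hy : a = 0 → y = 0)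
    (hx : √a * |x| ≤ S) : |x * y| ≤ S * ((a⁻¹ + y ^ 2) / 2) := by
  rcases ha.eq_or_lt with rfl | ha
  · simp [hy rfl]
  have hxS : |x| ≤ S * √(a⁻¹) := by
    rw [Real.sqrt_inv, ← div_eq_mul_inv, le_div_iff₀ (Real.sqrt_pos.mpr ha), mul_comm]
    exact hx
  have hS : 0 ≤ S := (by positivity : 0 ≤ √a * |x|).trans hx
  have amgm : √(a⁻¹) * |y| ≤ (a⁻¹ + y ^ 2) / 2 := by
    have := two_mul_le_add_sq (√(a⁻¹)) |y|
    rw [Real.sq_sqrt (inv_nonneg.mpr ha.le), sq_abs] at this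
    linarith
  calc |x * y| = |x| * |y| := abs_mul x y
    _ ≤ S * √(a⁻¹) * |y| := by gcongr
    _ = S * (√(a⁻¹) * |y|) := mul_assoc _ _ _
    _ ≤ S * ((a⁻¹ + y ^ 2) / 2) := by gcongr

theorem sqrt_mul_abs_sum_mul_le {m : ℕ} {a S : ℝ} {c y : Fin m → ℝ} (ha : 0 ≤ a)
    (hy : a * ∑ j, y j ^ 2 ≤ m) (hc : ∀ j, |c j| ≤ S) :
    √a * |∑ j, c j * y j| ≤ m * S := by
  rcases Nat.eq_zero_or_pos m with rfl | hm
  · simp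
  have hS : 0 ≤ S := (abs_nonneg _).trans (hc ⟨0, hm⟩)
  have hc_sq : ∑ j, c j ^ 2 ≤ m * S ^ 2 := by
    calc ∑ j, c j ^ 2 ≤ ∑ _j : Fin m, S ^ 2 :=
          Finset.sum_le_sum fun j _ => sq_abs (c j) ▸ pow_le_pow_left₀ (abs_nonneg _) (hc j) 2
      _ = m * S ^ 2 := by simp
  refine le_of_pow_le_pow_left₀ two_ne_zero (by positivity) ?_
  calc (√a * |∑ j, c j * y j|) ^ 2 = a * (∑ j, c j * y j) ^ 2 := by
        rw [mul_pow, Real.sq_sqrt ha, sq_abs]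
    _ ≤ a * ((∑ j, c j ^ 2) * ∑ j, y j ^ 2) := by
        gcongr
        exact Finset.sum_mul_sq_le_sq_mul_sq _ _ _
    _ = (∑ j, c j ^ 2) * (a * ∑ j, y j ^ 2) := by ring
    _ ≤ (m * S ^ 2) * m := by gcongr
    _ = (m * S) ^ 2 := by ring

section Integral

variable {α : Type*} [MeasurableSpace α] {μ : Measure α}

theorem abs_integral_mul_le_of_sqrt_mul_abs_le {v φ w : α → ℝ} {S : ℝ}
    (hw : ∀ t, 0 ≤ w t) (hφ : ∀ t, w t = 0 → φ t = 0) (hv : ∀ t, √(w t) * |v t| ≤ S)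
    (hw_inv : ∫ t, (w t)⁻¹ ∂μ = 1) (hφ_sq : ∫ t, φ t ^ 2 ∂μ = 1) :
    |∫ t, v t * φ t ∂μ| ≤ S := by
  have hint_inv : Integrable (fun t => (w t)⁻¹) μ := .of_integral_ne_zero (by simp [hw_inv])
  have hint_sq : Integrable (fun t => φ t ^ 2) μ := .of_integral_ne_zero (by simp [hφ_sq])
  calc |∫ t, v t * φ t ∂μ| ≤ ∫ t, |v t * φ t| ∂μ := abs_integral_le_integral_abs
    _ ≤ ∫ t, S * (((w t)⁻¹ + φ t ^ 2) / 2) ∂μ :=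
      integral_mono_of_nonneg (.of_forall fun t => abs_nonneg _)
        (((hint_inv.add hint_sq).div_const 2).const_mul S)
        (.of_forall fun t => abs_mul_le_of_sqrt_mul_abs_le (hw t) (hφ t) (hv t))
    _ = S := by
      rw [integral_const_mul, integral_div, integral_add hint_inv hint_sq, hw_inv, hφ_sq]
      norm_num

theorem integral_inv_eq_one_of_inv_eq_mean_sq {m : ℕ} (hm : m ≠ 0) {φ : Fin m → α → ℝ}
    {w : α → ℝ} (hw : ∀ t, (w t)⁻¹ = 1 / (m : ℝ) * ∑ j, φ j t ^ 2)
    (hφ_sq : ∀ j, ∫ t, φ j t ^ 2 ∂μ = 1) : ∫ t, (w t)⁻¹ ∂μ = 1 := by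
  have hint : ∀ j, Integrable (fun t => φ j t ^ 2) μ :=
    fun j => .of_integral_ne_zero (by simp [hφ_sq j])
  simp_rw [hw]
  rw [integral_const_mul, integral_finsetSum _ fun j _ => hint j]
  simp [hφ_sq, hm]

end Integral

section WeightedSupNorm

variable {m : ℕ} {X : Set (Fin d → ℝ)}

theorem wSupNorm_const_mul (w v : X → ℝ) {c : ℝ} (hc : 0 ≤ c) :
    wSupNorm w (fun t => c * v t) = c * wSupNorm w v := by
  simp only [wSupNorm, Real.mul_iSup_of_nonneg hc, abs_mul, abs_of_nonneg hc]
  congr 1 with t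
  ring

theorem proj_const_mul (μ : Measure X) (φ : Fin m → X → ℝ) (v : X → ℝ) (c : ℝ) :
    proj μ φ (fun t => c * v t) = fun t => c * proj μ φ v t := by
  funext t
  simp only [proj, Finset.mul_sum, mul_assoc, integral_const_mul]

theorem wSupNorm_proj_le (μ : Measure X) {φ : Fin m → X → ℝ}
    (hφ_sq : ∀ j, ∫ t, φ j t ^ 2 ∂μ = 1) {w : X → ℝ}
    (hw : ∀ t, (w t)⁻¹ = 1 / (m : ℝ) * ∑ j, φ j t ^ 2) {v : X → ℝ}
    (hv : BddAbove (Set.range fun t => √(w t) * |v t|)) :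
    wSupNorm w (proj μ φ v) ≤ m * wSupNorm w v := by
  have hw_nonneg t := nonneg_of_inv_eq_mean_sq (hw t)
  have hvS : ∀ t, √(w t) * |v t| ≤ wSupNorm w v := le_ciSup hv
  have hcoeff : ∀ j, |∫ t, v t * φ j t ∂μ| ≤ wSupNorm w v := fun j =>
    abs_integral_mul_le_of_sqrt_mul_abs_le hw_nonneg
      (fun t ht => eq_zero_of_inv_eq_mean_sq (hw t) ht j) hvS
      (integral_inv_eq_one_of_inv_eq_mean_sq (Fin.pos j).ne' hw hφ_sq) (hφ_sq j)
  refine Real.iSup_le (fun t => ?_) ?_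
  · exact sqrt_mul_abs_sum_mul_le (hw_nonneg t) (mul_sum_sq_le_of_inv_eq_mean_sq (hw t)) hcoeff
  · exact mul_nonneg m.cast_nonneg (Real.iSup_nonneg fun t => by positivity)

end WeightedSupNorm

theorem le_zero_of_forall_mul_le {r M : ℝ} (h : ∀ c : ℝ, 0 ≤ c → c * r ≤ M) : r ≤ 0 := by
  by_contra! hr
  have := h ((|M| + 1) / r) (by positivity)
  rw [div_mul_cancel₀ _ hr.ne'] at this
  linarith [le_abs_self M]

theorem projection_weighted_sup_bound_general
    {m : ℕ} {X : Set (Fin d → ℝ)} (μ : Measure X)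
    (φ : Fin m → X → ℝ)
    (hortho : ∀ i j, (∫ t, φ i t * φ j t ∂μ) = if i = j then (1 : ℝ) else 0)
    (w : X → ℝ) (hwopt : ∀ t, (w t)⁻¹ = (1 / (m : ℝ)) * ∑ j, φ j t ^ 2) :
    (∀ v : X → ℝ, MemLp v 2 μ →
        BddAbove (Set.range fun t : X => Real.sqrt (w t) * |v t|) →
        wSupNorm w (proj μ φ v) ≤ m * wSupNorm w v) ∧
      sSup {r : ℝ | ∃ v : X → ℝ, MemLp v 2 μ ∧ wSupNorm w v ≤ 1 ∧
          r = wSupNorm w (proj μ φ v)} ≤ m := by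
  have hφ_sq : ∀ j, ∫ t, φ j t ^ 2 ∂μ = 1 := fun j => by simpa [sq] using hortho j j
  refine ⟨fun v _ hv => wSupNorm_proj_le μ hφ_sq hwopt hv, ?_⟩
  by_cases hA : BddAbove {r : ℝ | ∃ v : X → ℝ, MemLp v 2 μ ∧ wSupNorm w v ≤ 1 ∧
      r = wSupNorm w (proj μ φ v)}
  swap
  · rw [Real.sSup_of_not_bddAbove hA]
    exact m.cast_nonneg
  obtain ⟨M, hM⟩ := hA
  refine Real.sSup_le ?_ m.cast_nonneg
  rintro _ ⟨v, hv2, hv1, rfl⟩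
  by_cases hv : BddAbove (Set.range fun t : X => Real.sqrt (w t) * |v t|)
  · calc wSupNorm w (proj μ φ v) ≤ m * wSupNorm w v := wSupNorm_proj_le μ hφ_sq hwopt hv
      _ ≤ m := mul_le_of_le_one_right m.cast_nonneg hv1
  -- `wSupNorm w v` is the junk value `0`, so every nonnegative multiple of `v` is admissible.
  have hscaled : ∀ c : ℝ, 0 ≤ c → c * wSupNorm w (proj μ φ v) ≤ M := fun c hc =>
    hM ⟨fun t => c * v t, hv2.const_mul c,
      by rw [wSupNorm_const_mul w v hc, wSupNorm, Real.iSup_of_not_bddAbove hv, mul_zero]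
         exact zero_le_one,
      by rw [proj_const_mul, wSupNorm_const_mul w _ hc]⟩
  exact (le_zero_of_forall_mul_le hscaled).trans m.cast_nonneg

/-- for the optimal weight `w⁻¹ = (1/m) ∑ φⱼ²`, the orthogonal projection
satisfies `‖P_{V_m} v‖_{∞,w} ≤ m ‖v‖_{∞,w}`; in particular `c_m ≤ m`. -/
theorem projection_weighted_sup_bound
    {m : ℕ} {X : Set (Fin d → ℝ)} (μ : Measure X) [IsProbabilityMeasure μ]
    (φ : Fin m → X → ℝ) (hφm : ∀ j, Measurable (φ j)) (hφ2 : ∀ j, MemLp (φ j) 2 μ)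
    (hortho : ∀ i j, (∫ t, φ i t * φ j t ∂μ) = if i = j then (1 : ℝ) else 0)
    (w : X → ℝ) (hwopt : ∀ t, (w t)⁻¹ = (1 / (m : ℝ)) * ∑ j, φ j t ^ 2) :
    (∀ v : X → ℝ, MemLp v 2 μ →
        BddAbove (Set.range fun t : X => Real.sqrt (w t) * |v t|) →
        wSupNorm w (proj μ φ v) ≤ m * wSupNorm w v) ∧
      sSup {r : ℝ | ∃ v : X → ℝ, MemLp v 2 μ ∧ wSupNorm w v ≤ 1 ∧
          r = wSupNorm w (proj μ φ v)} ≤ m :=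
  projection_weighted_sup_bound_general μ φ hortho w hwopt
end
end
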